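/- arXiv:2507.14927 — 2 statements merged into one kernel-verified Lean document; each statement's English description precedes it below -/
import Mathlib

section
/- If X : [t₀, T) → M_n(ℝ) is differentiable and satisfies X'(t) + A(t)·X(t) + X(t)·B(t) = F(t) with X(t₀) = X₀, then for all t in [t₀, T): det X(t) = exp(-∫_{t₀}^t tr(A(ξ)+B(ξ)) dξ) · ( ∫_{t₀}^t tr(adj(X(s))·F(s)) · exp(∫_{t₀}^s tr(A(ξ)+B(ξ)) dξ) ds + det X₀ ). -/
/-!
By Jacobi's formula, `(det X)' = tr (adj X · X')`. Substituting `X' = F - A X - X B` and using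
`adj X · X = X · adj X = det X · I` gives the scalar linear equation
`(det X)' = tr (adj X · F) - tr (A + B) · det X`, which variation of constants solves with the
integrating factor `exp (∫ tr (A + B))`.
-/

open Matrix intervalIntegral Set

namespace Matrix

variable {R m : Type*} [CommRing R] [Fintype m] [DecidableEq m]

theorem sum_det_updateCol_eq_trace_adjugate_mul (M N : Matrix m m R) :
    ∑ i, (M.updateCol i fun k => N k i).det = (M.adjugate * N).trace := by
  simp only [← cramer_apply, cramer_eq_adjugate_mulVec, mulVec, dotProduct, trace, diag,
    mul_apply]

theorem det_updateCol_eq_sum_perm (M : Matrix m m R) (i : m) (v : m → R) :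
    (M.updateCol i v).det = ∑ σ : Equiv.Perm m,
      (Equiv.Perm.sign σ : R) * ((∏ j ∈ Finset.univ.erase i, M (σ j) j) * v (σ i)) := by
  rw [det_apply']
  refine Finset.sum_congr rfl fun σ _ => ?_
  rw [← Finset.mul_prod_erase Finset.univ _ (Finset.mem_univ i),
    mul_comm (updateCol M i v (σ i) i)]
  congr 2
  · exact Finset.prod_congr rfl fun j hj => by simp [(Finset.mem_erase.mp hj).1]
  · simp

theorem trace_adjugate_mul_mul_self (M P : Matrix m m R) :
    (M.adjugate * (P * M)).trace = M.det * P.trace := by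
  rw [trace_mul_comm, Matrix.mul_assoc, mul_adjugate, Matrix.mul_smul, Matrix.mul_one,
    trace_smul, smul_eq_mul]

theorem trace_adjugate_mul_self_mul (M P : Matrix m m R) :
    (M.adjugate * (M * P)).trace = M.det * P.trace := by
  rw [← Matrix.mul_assoc, adjugate_mul, Matrix.smul_mul, Matrix.one_mul, trace_smul, smul_eq_mul]

theorem trace_adjugate_mul_of_add_mul_add_mul_eq {M M' A B F : Matrix m m R}
    (h : M' + A * M + M * B = F) :
    (M.adjugate * M').trace = (M.adjugate * F).trace - (A + B).trace * M.det := by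
  rw [← h, Matrix.mul_add, Matrix.mul_add, trace_add, trace_add, trace_adjugate_mul_mul_self,
    trace_adjugate_mul_self_mul, trace_add]
  ring

theorem hasDerivAt_det {𝕜 : Type*} [NontriviallyNormedField 𝕜] {M : 𝕜 → Matrix m m 𝕜}
    {M' : Matrix m m 𝕜} {x : 𝕜} (h : ∀ i j, HasDerivAt (fun s => M s i j) (M' i j) x) :
    HasDerivAt (fun s => (M s).det) ((M x).adjugate * M').trace x := by
  have hprod (σ : Equiv.Perm m) : HasDerivAt (fun s => ∏ j, M s (σ j) j)
      (∑ i, (∏ j ∈ Finset.univ.erase i, M x (σ j) j) * M' (σ i) i) x := by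
    simpa only [smul_eq_mul] using HasDerivAt.fun_finsetProd fun j _ => h (σ j) j
  rw [← sum_det_updateCol_eq_trace_adjugate_mul]
  simp only [det_updateCol_eq_sum_perm]
  rw [Finset.sum_comm]
  simp only [← Finset.mul_sum, det_apply']
  exact HasDerivAt.fun_sum fun σ _ => (hprod σ).const_mul _

end Matrix

theorem hasDerivAt_integral_of_continuousOn_Icc {a : ℝ → ℝ} {t₀ t x : ℝ}
    (ha : ContinuousOn a (Icc t₀ t)) (hx : x ∈ Ioo t₀ t) :
    HasDerivAt (fun s => ∫ ξ in t₀..s, a ξ) (a x) x := by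
  refine integral_hasDerivAt_right ?_ ?_ (ha.continuousAt (Icc_mem_nhds hx.1 hx.2))
  · exact (ha.mono (uIcc_of_le hx.1.le ▸ Icc_subset_Icc_right hx.2.le)).intervalIntegrable
  · exact (ha.mono Ioo_subset_Icc_self).stronglyMeasurableAtFilter isOpen_Ioo x hx

theorem eq_of_hasDerivAt_eq_sub_mul {u a f : ℝ → ℝ} {t₀ t : ℝ} (ht : t₀ ≤ t)
    (hu : ContinuousOn u (Icc t₀ t)) (ha : ContinuousOn a (Icc t₀ t))
    (hf : ContinuousOn f (Icc t₀ t))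
    (hderiv : ∀ x ∈ Ioo t₀ t, HasDerivAt u (f x - a x * u x) x) :
    u t = Real.exp (-∫ ξ in t₀..t, a ξ) *
      ((∫ s in t₀..t, f s * Real.exp (∫ ξ in t₀..s, a ξ)) + u t₀) := by
  set g : ℝ → ℝ := fun s => ∫ ξ in t₀..s, a ξ
  have hg : ContinuousOn g (Icc t₀ t) := by
    simpa only [uIcc_of_le ht] using continuousOn_primitive_interval
      (ha.integrableOn_compact isCompact_Icc |>.mono_set (uIcc_of_le ht).subset)
  have hexpg : ContinuousOn (fun s => Real.exp (g s)) (Icc t₀ t) := hg.rexp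
  have hftc : ∫ s in t₀..t, f s * Real.exp (g s) =
      u t * Real.exp (g t) - u t₀ * Real.exp (g t₀) := by
    refine integral_eq_sub_of_hasDerivAt_of_le ht (hu.mul hexpg) (fun x hx => ?_)
      ((hf.mul hexpg).intervalIntegrable_of_Icc ht)
    exact ((hderiv x hx).mul (hasDerivAt_integral_of_continuousOn_Icc ha hx).exp).congr_deriv
      (by ring)
  rw [hftc, show g t₀ = 0 from integral_same, Real.exp_zero, mul_one, sub_add_cancel,
    Real.exp_neg, mul_comm (u t), inv_mul_cancel_left₀ (Real.exp_pos _).ne']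

theorem stmt_1 {n : ℕ} (t₀ T : ℝ) (X X' A B F : ℝ → Matrix (Fin n) (Fin n) ℝ)
    (X₀ : Matrix (Fin n) (Fin n) ℝ)
    (hA : ContinuousOn A (Set.Ico t₀ T)) (hB : ContinuousOn B (Set.Ico t₀ T))
    (hF : ContinuousOn F (Set.Ico t₀ T))
    (hX : ∀ t ∈ Set.Ico t₀ T, ∀ i j, HasDerivAt (fun s => X s i j) (X' t i j) t)
    (hODE : ∀ t ∈ Set.Ico t₀ T, X' t + A t * X t + X t * B t = F t)
    (hX0 : X t₀ = X₀) :
    ∀ t ∈ Set.Ico t₀ T,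
      (X t).det = Real.exp (-∫ ξ in t₀..t, (A ξ + B ξ).trace) *
        ((∫ s in t₀..t, ((X s).adjugate * F s).trace *
            Real.exp (∫ ξ in t₀..s, (A ξ + B ξ).trace)) + X₀.det) := by
  subst hX0
  rintro t ⟨ht₀, htT⟩
  have hsub : Icc t₀ t ⊆ Ico t₀ T := Icc_subset_Ico_right htT
  have hXc : ContinuousOn X (Ico t₀ T) := fun s hs =>
    (continuousAt_pi.mpr fun i => continuousAt_pi.mpr fun j =>
      (hX s hs i j).continuousAt).continuousWithinAt
  refine eq_of_hasDerivAt_eq_sub_mul ht₀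
    ((continuous_id.matrix_det.comp_continuousOn hXc).mono hsub)
    ((continuous_id.matrix_trace.comp_continuousOn (hA.add hB)).mono hsub)
    ((continuous_id.matrix_trace.comp_continuousOn
      ((continuous_id.matrix_adjugate.comp_continuousOn hXc).mul hF)).mono hsub)
    fun x hx => ?_
  have hx' : x ∈ Ico t₀ T := hsub (Ioo_subset_Icc_self hx)
  exact (hasDerivAt_det (hX x hx')).congr_deriv
    (trace_adjugate_mul_of_add_mul_add_mul_eq (hODE x hx'))
end

section
/- If X : [t₀, T) → M_n(ℝ) is differentiable and satisfies X'(t) + A(t)·X(t) = F(t) with X(t₀) = X₀ (the case B = 0), then det X(t) = exp(-∫_{t₀}^t tr A(ξ) dξ) · ( ∫_{t₀}^t tr(adj(X(s))·F(s)) · exp(∫_{t₀}^s tr A(ξ) dξ) ds + det X₀ ). -/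
/-!
By Jacobi's formula, `(det X)' = tr (adj X · X') = tr (adj X · F) - tr (adj X · A X)`, and
`tr (adj X · A X) = tr (X adj X · A) = det X · tr A`. So `det X` solves the scalar linear equation
`φ' + (tr A) φ = tr (adj X · F)`, and the claimed identity is its variation-of-constants formula.
-/

open Matrix intervalIntegral

theorem Matrix.det_updateCol_eq_sum_adjugate {n R : Type*} [Fintype n] [DecidableEq n]
    [CommRing R] (M : Matrix n n R) (i : n) (b : n → R) :
    (M.updateCol i b).det = ∑ j, M.adjugate i j * b j := by
  rw [← cramer_apply, cramer_eq_adjugate_mulVec]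
  rfl

theorem Matrix.trace_adjugate_mul_mul_self_s10 {n R : Type*} [Fintype n] [DecidableEq n]
    [CommRing R] (M B : Matrix n n R) :
    (M.adjugate * (B * M)).trace = M.det * B.trace := by
  rw [trace_mul_comm, Matrix.mul_assoc, mul_adjugate, Matrix.mul_smul, Matrix.mul_one,
    trace_smul, smul_eq_mul]

open Finset in
theorem Matrix.hasDerivAt_det_s10 {n 𝕜 : Type*} [Fintype n] [DecidableEq n]
    [NontriviallyNormedField 𝕜] {X : 𝕜 → Matrix n n 𝕜} {D : Matrix n n 𝕜} {t : 𝕜}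
    (h : ∀ i j, HasDerivAt (fun s => X s i j) (D i j) t) :
    HasDerivAt (fun s => (X s).det) ((X t).adjugate * D).trace t := by
  have hprod (σ : Equiv.Perm n) : HasDerivAt (fun s => ∏ i, X s (σ i) i)
      (∑ i, ∏ j, (X t).updateCol i (fun k => D k i) (σ j) j) t := by
    refine (HasDerivAt.fun_finsetProd (u := univ) (f := fun i s => X s (σ i) i)
      (f' := fun i => D (σ i) i) fun i _ => h (σ i) i).congr_deriv
      (sum_congr rfl fun i _ => ?_)
    rw [← mul_prod_erase _ _ (mem_univ i), smul_eq_mul, mul_comm, updateCol_self]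
    congr 1
    exact prod_congr rfl fun j hj => (updateCol_ne (ne_of_mem_erase hj)).symm
  have hdet : HasDerivAt (fun s => ∑ σ : Equiv.Perm n, (Equiv.Perm.sign σ : 𝕜) * ∏ i, X s (σ i) i)
      (∑ σ : Equiv.Perm n, (Equiv.Perm.sign σ : 𝕜) *
        ∑ i, ∏ j, (X t).updateCol i (fun k => D k i) (σ j) j) t :=
    HasDerivAt.fun_sum fun σ _ => (hprod σ).const_mul _
  convert hdet using 1
  · exact funext fun s => det_apply' _
  · simp only [mul_sum]
    rw [sum_comm]
    simp only [← det_apply', det_updateCol_eq_sum_adjugate, trace, diag, mul_apply]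

open Set in
theorem ContinuousOn.hasDerivAt_integral_of_mem_Ioo {E : Type*} [NormedAddCommGroup E]
    [NormedSpace ℝ E] [CompleteSpace E] {f : ℝ → E} {a b x : ℝ}
    (hf : ContinuousOn f (Ico a b)) (hx : x ∈ Ioo a b) :
    HasDerivAt (fun u => ∫ s in a..u, f s) (f x) x :=
  integral_hasDerivAt_right
    ((hf.mono fun _ hy => ⟨hy.1, hy.2.trans_lt hx.2⟩).intervalIntegrable_of_Icc hx.1.le)
    ((hf.mono Ioo_subset_Ico_self).stronglyMeasurableAtFilter isOpen_Ioo x hx)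
    (hf.continuousAt (Ico_mem_nhds hx.1 hx.2))

open Set in
theorem eq_duhamel_of_hasDerivAt {φ a g : ℝ → ℝ} {t₀ T : ℝ}
    (ha : ContinuousOn a (Ico t₀ T)) (hg : ContinuousOn g (Ico t₀ T))
    (hφ : ∀ t ∈ Ico t₀ T, HasDerivAt φ (g t - a t * φ t) t) :
    ∀ t ∈ Ico t₀ T, φ t = Real.exp (-∫ ξ in t₀..t, a ξ) *
      ((∫ s in t₀..t, g s * Real.exp (∫ ξ in t₀..s, a ξ)) + φ t₀) := by
  intro t ht
  have hsub : Icc t₀ t ⊆ Ico t₀ T := Icc_subset_Ico_right ht.2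
  set E := fun u => Real.exp (∫ ξ in t₀..u, a ξ)
  have hE_cont : ContinuousOn E (Icc t₀ t) := by
    rw [← uIcc_of_le ht.1] at hsub ⊢
    exact Real.continuous_exp.comp_continuousOn
      (continuousOn_primitive_interval ((ha.mono hsub).integrableOn_compact isCompact_uIcc))
  have hE_deriv (x : ℝ) (hx : x ∈ Ioo t₀ t) : HasDerivAt E (E x * a x) x :=
    (ha.hasDerivAt_integral_of_mem_Ioo ⟨hx.1, hx.2.trans ht.2⟩).exp
  have hφ_cont : ContinuousOn φ (Icc t₀ t) := fun x hx =>
    (hφ x (hsub hx)).continuousAt.continuousWithinAt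
  have hFTC : ∫ s in t₀..t, g s * E s = φ t * E t - φ t₀ * E t₀ :=
    integral_eq_sub_of_hasDerivAt_of_le ht.1 (hφ_cont.mul hE_cont)
      (fun x hx => ((hφ x (hsub (Ioo_subset_Icc_self hx))).mul
        (hE_deriv x hx)).congr_deriv (by ring))
      (((hg.mono hsub).mul hE_cont).intervalIntegrable_of_Icc ht.1)
  rw [hFTC, Real.exp_neg]
  simp only [E, integral_same, Real.exp_zero]
  field_simp
  ring

theorem stmt_10 {n : ℕ} (t₀ T : ℝ) (X X' A F : ℝ → Matrix (Fin n) (Fin n) ℝ)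
    (X₀ : Matrix (Fin n) (Fin n) ℝ)
    (hA : ContinuousOn A (Set.Ico t₀ T)) (hF : ContinuousOn F (Set.Ico t₀ T))
    (hX : ∀ t ∈ Set.Ico t₀ T, ∀ i j, HasDerivAt (fun s => X s i j) (X' t i j) t)
    (hODE : ∀ t ∈ Set.Ico t₀ T, X' t + A t * X t = F t)
    (hX0 : X t₀ = X₀) :
    ∀ t ∈ Set.Ico t₀ T,
      (X t).det = Real.exp (-∫ ξ in t₀..t, (A ξ).trace) *
        ((∫ s in t₀..t, ((X s).adjugate * F s).trace *
            Real.exp (∫ ξ in t₀..s, (A ξ).trace)) + X₀.det) := by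
  have hX_cont : ContinuousOn X (Set.Ico t₀ T) := fun t ht =>
    (continuousAt_pi.2 fun i => continuousAt_pi.2 fun j =>
      (hX t ht i j).continuousAt).continuousWithinAt
  have hdet (t : ℝ) (ht : t ∈ Set.Ico t₀ T) : HasDerivAt (fun s => (X s).det)
      (((X t).adjugate * F t).trace - (A t).trace * (X t).det) t := by
    rw [← hODE t ht, Matrix.mul_add, trace_add, trace_adjugate_mul_mul_self_s10, mul_comm,
      add_sub_cancel_right]
    exact hasDerivAt_det_s10 (hX t ht)
  rw [← hX0]
  exact eq_duhamel_of_hasDerivAt (continuous_id.matrix_trace.comp_continuousOn hA)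
    (continuous_id.matrix_trace.comp_continuousOn
      ((continuous_id.matrix_adjugate.comp_continuousOn hX_cont).mul hF)) hdet
end
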